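/- Let D be an orientation of a chordal graph G, v a simplicial vertex of G, U the set of non-neighbors of v (excluding v itself), and N⁺(v) the set of out-neighbors of v. If K is a kernel of D, then K \ {v} is a kernel of the induced subdigraph D[U ∪ N⁺(v)]. -/
import Mathlib


/-- `G` has an induced cycle of length `n`. -/
def HasInducedCycle {V : Type*} (G : SimpleGraph V) (n : ℕ) : Prop :=
  ∃ f : Fin n → V, Function.Injective f ∧
    ∀ i j : Fin n, G.Adj (f i) (f j) ↔ (SimpleGraph.cycleGraph n).Adj i j

/-- `G` is chordal: no induced cycle of length 4 or more. -/
def IsChordal {V : Type*} (G : SimpleGraph V) : Prop :=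
  ∀ n : ℕ, 4 ≤ n → ¬ HasInducedCycle G n

/-- `K` is a kernel of the subdigraph induced by `W`:
`K ⊆ W`, `K` is stable in `G`, and `K` absorbs `W \ K`. -/
def KernelOn {V : Type*} (G : SimpleGraph V) (A : V → V → Prop) (W K : Set V) : Prop :=
  K ⊆ W ∧ (∀ u ∈ K, ∀ v ∈ K, ¬ G.Adj u v) ∧ (∀ u ∈ W, u ∉ K → ∃ w ∈ K, A u w)

/-- If `v` is a simplicial vertex of a chordal graph `G`, `U` its set of
non-neighbors (excluding `v`), and `K` a kernel of an orientation `D` of `G`,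
then `K \ {v}` is a kernel of `D[U ∪ N⁺(v)]`. -/
theorem kernel_restrict_simplicial {V : Type*}
    (G : SimpleGraph V) (hchordal : IsChordal G)
    (A : V → V → Prop)
    (hsub : ∀ u v : V, A u v → G.Adj u v)
    (hor : ∀ u v : V, G.Adj u v → (A u v ↔ ¬ A v u))
    (v : V)
    (hsimp : ∀ a ∈ G.neighborSet v, ∀ b ∈ G.neighborSet v, a ≠ b → G.Adj a b)
    (K : Set V)
    (hKstable : ∀ u ∈ K, ∀ w ∈ K, ¬ G.Adj u w)
    (hKabsorb : ∀ u ∉ K, ∃ w ∈ K, A u w) :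
    KernelOn G A ({u : V | u ≠ v ∧ ¬ G.Adj v u} ∪ {u : V | A v u}) (K \ {v}) := by
  refine ⟨?_, ?_, ?_⟩
  · rintro u ⟨huK, huv⟩
    simp only [Set.mem_singleton_iff] at huv
    by_cases hadj : G.Adj v u
    · right
      by_contra hnAvu
      have hvK : v ∉ K := fun hvK => hKstable u huK v hvK hadj.symm
      obtain ⟨w, hwK, hAvw⟩ := hKabsorb v hvK
      have hwu : w ≠ u := fun h => hnAvu (h ▸ hAvw)
      exact hKstable w hwK u huK
        (hsimp w (hsub v w hAvw) u hadj hwu)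
    · left; exact ⟨huv, hadj⟩
  · intro a ha b hb
    exact hKstable a ha.1 b hb.1
  · intro u huW huK
    have huKfull : u ∉ K := by
      intro h
      apply huK
      refine ⟨h, ?_⟩
      simp only [Set.mem_singleton_iff]
      rintro rfl
      rcases huW with h1 | h2
      · exact h1.1 rfl
      · exact G.irrefl (hsub u u h2)
    obtain ⟨w, hwK, hAuw⟩ := hKabsorb u huKfull
    refine ⟨w, ⟨hwK, ?_⟩, hAuw⟩
    simp only [Set.mem_singleton_iff]
    intro hwv
    subst hwv
    rcases huW with h1 | h2
    · exact h1.2 (hsub u w hAuw).symm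
    · exact (hor u w (hsub u w hAuw)).mp hAuw h2
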